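/- Let n ≥ 1 and let Ω ⊆ 𝕆_sⁿ be a real-connected slice-domain with Ω ∩ ℝⁿ ≠ ∅. Then for every q ∈ Ω and every x ∈ Ω ∩ ℝⁿ there exist I ∈ 𝕊 and a continuous path γ : [0,1] → Ω ∩ ℂ_Iⁿ (continuous with respect to the Euclidean topology of ℂ_Iⁿ) with γ(0) = q and γ(1) = x. -/

import Mathlib

/-! Octonions via the Cayley–Dickson construction on the quaternions,
the n-dimensional quadratic cone, the slice topology, and slice regularity. -/

noncomputable section
open Quaternion Topology

/-- The octonions, as `ℍ × ℍ` with the (L²) Euclidean norm and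
Cayley–Dickson multiplication. -/
abbrev Oct : Type := WithLp 2 (ℍ × ℍ)

namespace Oct

def c1 (p : Oct) : ℍ := (WithLp.equiv 2 (ℍ × ℍ) p).1
def c2 (p : Oct) : ℍ := (WithLp.equiv 2 (ℍ × ℍ) p).2
def mk (a b : ℍ) : Oct := (WithLp.equiv 2 (ℍ × ℍ)).symm (a, b)

instance : One Oct := ⟨mk 1 0⟩

/-- Cayley–Dickson multiplication. -/
instance : Mul Oct :=
  ⟨fun p q => mk (c1 p * c1 q - star (c2 q) * c2 p) (c2 q * c1 p + c2 p * star (c1 q))⟩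

/-- Octonionic conjugation. -/
instance : Star Oct := ⟨fun p => mk (star (c1 p)) (-(c2 p))⟩

/-- Inverse: `p⁻¹ = ‖p‖⁻² • (star p)` (so `0⁻¹ = 0`). -/
instance : Inv Oct := ⟨fun p => (‖p‖ ^ 2)⁻¹ • star p⟩

/-- The real inner product on `𝕆 ≅ ℝ⁸`, via polarization. -/
def oinner (p q : Oct) : ℝ := (1 / 4) * (‖p + q‖ ^ 2 - ‖p - q‖ ^ 2)

/-- The sphere `𝕊` of imaginary units of the octonions. -/
def Sph : Set Oct := {I | I * I = -1}

/-- The slice complex plane `ℂ_I = ℝ + ℝ I ⊆ 𝕆`. -/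
def CI (I : Oct) : Set Oct := {z | ∃ s t : ℝ, z = s • (1 : Oct) + t • I}

end Oct

open Oct

/-- The point `x + y I ∈ ℂ_Iⁿ ⊆ 𝕆ⁿ`. -/
def aff {n : ℕ} (x y : Fin n → ℝ) (I : Oct) : Fin n → Oct :=
  fun m => x m • (1 : Oct) + y m • I

/-- The embedding `ℝⁿ ⊆ 𝕆ⁿ`. -/
def ofRealn {n : ℕ} (x : Fin n → ℝ) : Fin n → Oct := fun m => x m • (1 : Oct)

/-- The slice `ℂ_Iⁿ ⊆ 𝕆ⁿ`. -/
def slicen (n : ℕ) (I : Oct) : Set (Fin n → Oct) := {q | ∃ x y : Fin n → ℝ, q = aff x y I}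

/-- The `n`-dimensional quadratic cone `𝕆ₛⁿ = ⋃_{I ∈ 𝕊} ℂ_Iⁿ`. -/
def cone (n : ℕ) : Set (Fin n → Oct) := ⋃ I ∈ Sph, slicen n I

/-- The slice topology `τ_s`: a set is open iff its trace on every slice `ℂ_Iⁿ`
is open (expressed via the canonical parametrizations `(x,y) ↦ x + yI`). -/
def τs (n : ℕ) : TopologicalSpace (Fin n → Oct) :=
  ⨆ I : Sph, TopologicalSpace.coinduced
    (fun p : (Fin n → ℝ) × (Fin n → ℝ) => aff p.1 p.2 I.1) inferInstance

/-- A slice-open subset of the quadratic cone. -/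
def SliceOpen (n : ℕ) (Ω : Set (Fin n → Oct)) : Prop :=
  Ω ⊆ cone n ∧ IsOpen[τs n] Ω

/-- A slice-domain: a nonempty slice-connected slice-open subset of the cone. -/
def SliceDomain (n : ℕ) (Ω : Set (Fin n → Oct)) : Prop :=
  SliceOpen n Ω ∧ @IsConnected _ (τs n) Ω

/-- Real-connectedness: `Ω ∩ ℝⁿ` is a (pre)connected subset of `ℝⁿ`. -/
def RealConnected (n : ℕ) (Ω : Set (Fin n → Oct)) : Prop :=
  IsPreconnected {x : Fin n → ℝ | ofRealn x ∈ Ω}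

/-- Axially symmetric subsets of the cone. -/
def AxSymm (n : ℕ) (Ω : Set (Fin n → Oct)) : Prop :=
  ∀ (x y : Fin n → ℝ), ∀ I ∈ Sph, ∀ J ∈ Sph, aff x y I ∈ Ω → aff x y J ∈ Ω

/-- The upper half-space `ℝ²ⁿ₊`: pairs `(x,y)` with `y = 0` or the first
nonzero coordinate of `y` positive. -/
def pos2n (n : ℕ) : Set ((Fin n → ℝ) × (Fin n → ℝ)) :=
  {p | p.2 = 0 ∨ ∃ m : Fin n, 0 < p.2 m ∧ ∀ k : Fin n, k < m → p.2 k = 0}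

/-- `Ω_{s₁}`. -/
def s1 {n : ℕ} (Ω : Set (Fin n → Oct)) : Set ((Fin n → ℝ) × (Fin n → ℝ)) :=
  {p | ∃ I ∈ Sph, aff p.1 p.2 I ∈ Ω}

/-- `Ω_{s₂}`. -/
def s2 {n : ℕ} (Ω : Set (Fin n → Oct)) : Set ((Fin n → ℝ) × (Fin n → ℝ)) :=
  {p | ∃ J ∈ Sph, ∃ K ∈ Sph, J ≠ K ∧ aff p.1 p.2 J ∈ Ω ∧ aff p.1 p.2 K ∈ Ω}

/-- Slice functions: induced on `Ω_{s₂}⁺` by a pair `(F₁, F₂)` via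
`f(x + yI) = F₁(x,y) + I·F₂(x,y)`. -/
def IsSliceFun (n : ℕ) (Ω : Set (Fin n → Oct)) (f : (Fin n → Oct) → Oct) : Prop :=
  ∃ F₁ F₂ : (Fin n → ℝ) × (Fin n → ℝ) → Oct,
    ∀ x y : Fin n → ℝ, (x, y) ∈ s2 Ω ∩ pos2n n → ∀ I ∈ Sph, aff x y I ∈ Ω →
      f (aff x y I) = F₁ (x, y) + I * F₂ (x, y)

/-- Holomorphy of a function of `n` slice variables, read through the
parametrization `(x,y) ↦ x + yI`: continuous partial derivatives (i.e. `C¹`)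
and the Cauchy–Riemann equations `(∂/∂xₘ + I ∂/∂yₘ) g = 0` on `U`. -/
def Holo (n : ℕ) (I : Oct) (g : (Fin n → ℝ) × (Fin n → ℝ) → Oct)
    (U : Set ((Fin n → ℝ) × (Fin n → ℝ))) : Prop :=
  ContDiffOn ℝ 1 g U ∧
  ∀ p ∈ U, ∀ m : Fin n,
    fderiv ℝ g p (Pi.single m 1, 0) + I * fderiv ℝ g p (0, Pi.single m 1) = 0

/-- Weak slice regularity: each restriction `f|_{Ω ∩ ℂ_Iⁿ}` is holomorphic. -/
def WSliceReg (n : ℕ) (Ω : Set (Fin n → Oct)) (f : (Fin n → Oct) → Oct) : Prop :=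
  ∀ I ∈ Sph, Holo n I (fun p => f (aff p.1 p.2 I)) {p | aff p.1 p.2 I ∈ Ω}

/-- The complex structure `σ(a,b) = (−b,a)` on `𝕆²`. -/
def sigma2 : Oct × Oct → Oct × Oct := fun w => (-w.2, w.1)

/-- Holomorphic stem maps: `F : V → 𝕆²` extends to a `C¹` map `G` on an open
neighborhood `U ⊇ V` satisfying `(∂/∂xₘ + σ ∂/∂yₘ) G = 0` on `U`. -/
def StemHolo (n : ℕ) (V : Set ((Fin n → ℝ) × (Fin n → ℝ)))
    (F : (Fin n → ℝ) × (Fin n → ℝ) → Oct × Oct) : Prop :=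
  ∃ (U : Set ((Fin n → ℝ) × (Fin n → ℝ))) (G : (Fin n → ℝ) × (Fin n → ℝ) → Oct × Oct),
    IsOpen U ∧ V ⊆ U ∧ Set.EqOn G F V ∧ ContDiffOn ℝ 1 G U ∧
    ∀ p ∈ U, ∀ m : Fin n,
      fderiv ℝ G p (Pi.single m 1, 0) + sigma2 (fderiv ℝ G p (0, Pi.single m 1)) = 0

/-- Strong slice regularity: `f` is induced by a holomorphic stem map on `Ω_{s₁}`. -/
def SSliceReg (n : ℕ) (Ω : Set (Fin n → Oct)) (f : (Fin n → Oct) → Oct) : Prop :=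
  ∃ F : (Fin n → ℝ) × (Fin n → ℝ) → Oct × Oct, StemHolo n (s1 Ω) F ∧
    ∀ x y : Fin n → ℝ, ∀ I ∈ Sph, aff x y I ∈ Ω →
      f (aff x y I) = (F (x, y)).1 + I * (F (x, y)).2

/-- An s-basis `{I, J, K}` of the octonions. -/
def IsSBasis (I J K : Oct) : Prop :=
  I ∈ Sph ∧ J ∈ Sph ∧ K ∈ Sph ∧
  LinearIndependent ℝ ![(1 : Oct), I, J, I * J, K, J * K, I * K, (I * J) * K] ∧
  Submodule.span ℝ (Set.range ![(1 : Oct), I, J, I * J, K, J * K, I * K, (I * J) * K]) = ⊤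

/-- Iterated left multiplication `L_w^β = (L_{w₁})^{β₁} ∘ ⋯ ∘ (L_{wₙ})^{βₙ}`. -/
def Lpow {n : ℕ} (w : Fin n → Oct) (β : Fin n → ℕ) : Oct → Oct :=
  fun a => (List.finRange n).foldr (fun ℓ c => (fun o => w ℓ * o)^[β ℓ] c) a

/-- The `*`-power `(q − p)^{*α} a = ∑_{β ≤ α} C(α,β) L_q^β (L_{−p}^{α−β} a)`. -/
def starPow {n : ℕ} (p : Fin n → Oct) (α : Fin n → ℕ) (a : Oct) (q : Fin n → Oct) : Oct :=
  ∑ β ∈ Finset.Iic α, (∏ ℓ, (α ℓ).choose (β ℓ)) • Lpow q β (Lpow (-p) (α - β) a)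

/-- The `ℓ`-th slice derivative `∂_ℓ f (x + w) = (∂/∂x_ℓ) f (x + w)`. -/
def sderiv {n : ℕ} (ℓ : Fin n) (f : (Fin n → Oct) → Oct) : (Fin n → Oct) → Oct :=
  fun q => deriv (fun t : ℝ => f (fun m => q m + (if m = ℓ then t else 0) • (1 : Oct))) 0

/-- The iterated slice derivative `f^{(α)} = (∂₁)^{α₁} ⋯ (∂ₙ)^{αₙ} f`. -/
def sderivMulti {n : ℕ} (α : Fin n → ℕ) (f : (Fin n → Oct) → Oct) : (Fin n → Oct) → Oct :=
  (List.finRange n).foldr (fun ℓ g => (sderiv ℓ)^[α ℓ] g) f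

/-- The slice-polydisc `P̃(q₀, r)` (relative to `I ∈ 𝕊` with `q₀ ∈ ℂ_Iⁿ`):
points `x + yJ` with `x ± yI` in the closed polydisc `P_I(q₀, r)`. -/
def polyDisc {n : ℕ} (q₀ : Fin n → Oct) (I : Oct) (r : Fin n → ℝ) : Set (Fin n → Oct) :=
  {q | ∃ x y : Fin n → ℝ, ∃ J ∈ Sph, q = aff x y J ∧
        (∀ ℓ, ‖aff x y I ℓ - q₀ ℓ‖ ≤ r ℓ) ∧ (∀ ℓ, ‖aff x (-y) I ℓ - q₀ ℓ‖ ≤ r ℓ)}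

/-! The points of `Ω` that can be joined, inside one slice `Ω ∩ ℂ_Iⁿ`, to a real point of `Ω` form
a slice-open set whose complement in `Ω` is slice-open too: on each slice both are unions of path
components of the open set `Ω ∩ ℂ_Iⁿ`. That the property does not depend on the slice chosen to
represent a point comes from the fact that `x + yI = x' + y'J` with `y ≠ 0` forces `x = x'`,
`I = cJ` and `y' = cy`, and `(x, y) ↦ (x, cy)` maps `Ω ∩ ℂ_Iⁿ` into `Ω ∩ ℂ_Jⁿ` fixing real points.
Slice-connectedness makes this set all of `Ω`, and real-connectedness then joins the real endpoint
to any other real point through the open, hence path-connected, set `Ω ∩ ℝⁿ`. -/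

theorem Quaternion.re_eq_zero_of_mul_self_eq_neg_one {a : ℍ} (h : a * a = -1) : a.re = 0 := by
  have h1 := congrArg (·.re) h
  have h2 := congrArg (·.imI) h
  have h3 := congrArg (·.imJ) h
  have h4 := congrArg (·.imK) h
  simp only [re_mul, re_neg, re_one, imI_mul, imI_neg, imI_one, neg_zero, imJ_mul, imJ_neg,
    imJ_one, imK_mul, imK_neg, imK_one] at h1 h2 h3 h4
  nlinarith [sq_nonneg a.re, sq_nonneg a.imI, sq_nonneg a.imJ, sq_nonneg a.imK]

namespace Oct

@[simp] theorem c1_add (p q : Oct) : c1 (p + q) = c1 p + c1 q := rfl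
@[simp] theorem c1_smul (s : ℝ) (p : Oct) : c1 (s • p) = s • c1 p := rfl
@[simp] theorem c1_neg (p : Oct) : c1 (-p) = -c1 p := rfl
@[simp] theorem c1_zero : c1 0 = 0 := rfl
@[simp] theorem c1_one : c1 1 = 1 := rfl
@[simp] theorem c2_neg (p : Oct) : c2 (-p) = -c2 p := rfl
@[simp] theorem c2_zero : c2 0 = 0 := rfl
@[simp] theorem c2_one : c2 1 = 0 := rfl
theorem c1_mul (p q : Oct) : c1 (p * q) = c1 p * c1 q - star (c2 q) * c2 p := rfl
theorem c2_mul (p q : Oct) : c2 (p * q) = c2 q * c1 p + c2 p * star (c1 q) := rfl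

@[simp] theorem c1_mk (a b : ℍ) : c1 (mk a b) = a := rfl
@[simp] theorem c2_mk (a b : ℍ) : c2 (mk a b) = b := rfl

theorem ext {p q : Oct} (h1 : c1 p = c1 q) (h2 : c2 p = c2 q) : p = q :=
  (WithLp.equiv 2 (ℍ × ℍ)).injective (Prod.ext h1 h2)

theorem re_c1_eq_zero_of_mem_Sph {I : Oct} (hI : I ∈ Sph) : (c1 I).re = 0 := by
  have h1 : c1 I * c1 I - star (c2 I) * c2 I = -1 := congrArg c1 hI
  have h2 : c2 I * (c1 I + star (c1 I)) = 0 := by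
    rw [mul_add]; simpa [c2_mul] using congrArg c2 hI
  rcases mul_eq_zero.1 h2 with hb | ha
  · rw [hb, star_zero, zero_mul, sub_zero] at h1
    exact Quaternion.re_eq_zero_of_mul_self_eq_neg_one h1
  · simpa using congrArg (·.re) ha

theorem ne_zero_of_mem_Sph {I : Oct} (hI : I ∈ Sph) : I ≠ 0 := by
  rintro rfl
  simpa [c1_mul] using congrArg (fun p => (c1 p).re) hI

theorem Sph_nonempty : Sph.Nonempty :=
  ⟨mk 0 1, Oct.ext (by simp [c1_mul]) (by simp [c2_mul])⟩

end Oct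

section JoinedIn

variable {X ι : Type*} [TopologicalSpace X] [LocallyPathConnectedSpace X] {U : Set X}

theorem isOpen_setOf_exists_joinedIn (hU : IsOpen U) (f : ι → X) :
    IsOpen {x | ∃ i, JoinedIn U x (f i)} :=
  isOpen_iff_forall_mem_open.2 fun x ⟨i, hx⟩ =>
    ⟨pathComponentIn U x, fun _ hy => ⟨i, hy.symm.trans hx⟩,
      hU.pathComponentIn x, mem_pathComponentIn_self hx.source_mem⟩

theorem isOpen_diff_setOf_exists_joinedIn (hU : IsOpen U) (f : ι → X) :
    IsOpen (U \ {x | ∃ i, JoinedIn U x (f i)}) :=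
  isOpen_iff_forall_mem_open.2 fun x ⟨hxU, hx⟩ =>
    ⟨pathComponentIn U x,
      fun _ hy => ⟨pathComponentIn_subset hy, fun ⟨i, hyi⟩ => hx ⟨i, hy.trans hyi⟩⟩,
      hU.pathComponentIn x, mem_pathComponentIn_self hxU⟩

end JoinedIn

section

variable {n : ℕ}

def sliceTrace (Ω : Set (Fin n → Oct)) (I : Oct) : Set ((Fin n → ℝ) × (Fin n → ℝ)) :=
  (fun p => aff p.1 p.2 I) ⁻¹' Ω

theorem isOpen_τs_iff {U : Set (Fin n → Oct)} :
    IsOpen[τs n] U ↔ ∀ I ∈ Sph, IsOpen (sliceTrace U I) := by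
  rw [τs, isOpen_iSup_iff]
  simp only [isOpen_coinduced, Subtype.forall]
  rfl

theorem aff_zero (x : Fin n → ℝ) (I : Oct) : aff x 0 I = ofRealn x := by
  ext1 m; simp [aff, ofRealn]

theorem aff_smul_right (x y : Fin n → ℝ) (c : ℝ) (J : Oct) :
    aff x y (c • J) = aff x (c • y) J := by
  ext1 m; simp [aff, smul_smul, mul_comm]

theorem eq_and_smul_eq_of_aff_eq {x y x' y' : Fin n → ℝ} {I J : Oct} (hI : I ∈ Sph) (hJ : J ∈ Sph)
    (h : aff x y I = aff x' y' J) : x = x' ∧ ∀ m, y m • I = y' m • J := by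
  have hx : x = x' := funext fun m => by
    simpa [aff, re_c1_eq_zero_of_mem_Sph hI, re_c1_eq_zero_of_mem_Sph hJ] using
      congrArg (fun q => (c1 (q m)).re) h
  subst hx
  exact ⟨rfl, fun m => add_left_cancel (congrFun h m)⟩

theorem mapsTo_sliceTrace_smul (Ω : Set (Fin n → Oct)) (c : ℝ) (J : Oct) :
    Set.MapsTo (fun p => (p.1, c • p.2)) (sliceTrace Ω (c • J)) (sliceTrace Ω J) :=
  fun p hp => by simpa [sliceTrace, aff_smul_right] using hp

def joinedToReal (Ω : Set (Fin n → Oct)) (I : Oct) : Set ((Fin n → ℝ) × (Fin n → ℝ)) :=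
  {p | ∃ r : Fin n → ℝ, JoinedIn (sliceTrace Ω I) p (r, 0)}

theorem joinedToReal_of_aff_eq {Ω : Set (Fin n → Oct)} {x y x' y' : Fin n → ℝ} {I J : Oct}
    (hI : I ∈ Sph) (hJ : J ∈ Sph) (h : aff x y I = aff x' y' J)
    (hxy : (x, y) ∈ joinedToReal Ω I) : (x', y') ∈ joinedToReal Ω J := by
  obtain ⟨rfl, hy⟩ := eq_and_smul_eq_of_aff_eq hI hJ h
  obtain ⟨r, hr⟩ := hxy
  by_cases hy0 : y = 0
  · obtain rfl : y' = 0 := funext fun m =>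
      (smul_eq_zero.1 (by rw [← hy m, hy0, Pi.zero_apply, zero_smul])).resolve_right
        (ne_zero_of_mem_Sph hJ)
    exact ⟨x, JoinedIn.refl (show aff x 0 J ∈ Ω from h ▸ hr.source_mem)⟩
  obtain ⟨m, hm⟩ : ∃ m, y m ≠ 0 := Function.ne_iff.1 hy0
  obtain ⟨c, hIc⟩ : ∃ c : ℝ, I = c • J :=
    ⟨(y m)⁻¹ * y' m, by rw [mul_smul, ← hy m, inv_smul_smul₀ hm]⟩
  have hyc : y' = c • y := funext fun k => smul_left_injective ℝ (ne_zero_of_mem_Sph hJ) <| by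
    simp [← hy k, hIc, smul_smul, mul_comm]
  subst hIc hyc
  refine ⟨r, ?_⟩
  simpa using (hr.map (f := fun p => (p.1, c • p.2)) (by fun_prop)).mono
    (mapsTo_sliceTrace_smul Ω c J).image_subset

def sliceJoinedToReal (Ω : Set (Fin n → Oct)) : Set (Fin n → Oct) :=
  {q | ∃ I ∈ Sph, ∃ p ∈ joinedToReal Ω I, aff p.1 p.2 I = q}

theorem sliceTrace_sliceJoinedToReal {Ω : Set (Fin n → Oct)} {J : Oct} (hJ : J ∈ Sph) :
    sliceTrace (sliceJoinedToReal Ω) J = joinedToReal Ω J := by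
  ext ⟨x, y⟩
  exact ⟨fun ⟨I, hI, _, hp, h⟩ => joinedToReal_of_aff_eq hI hJ h hp,
    fun hp => ⟨J, hJ, _, hp, rfl⟩⟩

theorem isOpen_sliceJoinedToReal {Ω : Set (Fin n → Oct)} (hΩ : IsOpen[τs n] Ω) :
    IsOpen[τs n] (sliceJoinedToReal Ω) :=
  isOpen_τs_iff.2 fun J hJ => sliceTrace_sliceJoinedToReal hJ ▸
    isOpen_setOf_exists_joinedIn (isOpen_τs_iff.1 hΩ J hJ) _

theorem isOpen_diff_sliceJoinedToReal {Ω : Set (Fin n → Oct)} (hΩ : IsOpen[τs n] Ω) :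
    IsOpen[τs n] (Ω \ sliceJoinedToReal Ω) :=
  isOpen_τs_iff.2 fun J hJ => by
    rw [sliceTrace, Set.preimage_sdiff, ← sliceTrace, ← sliceTrace, sliceTrace_sliceJoinedToReal hJ]
    exact isOpen_diff_setOf_exists_joinedIn (isOpen_τs_iff.1 hΩ J hJ) _

theorem ofRealn_mem_sliceJoinedToReal {Ω : Set (Fin n → Oct)} {x : Fin n → ℝ}
    (hx : ofRealn x ∈ Ω) : ofRealn x ∈ sliceJoinedToReal Ω := by
  obtain ⟨I, hI⟩ := Sph_nonempty
  exact ⟨I, hI, (x, 0), ⟨x, JoinedIn.refl (by simpa [sliceTrace, aff_zero])⟩, aff_zero x I⟩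

theorem subset_sliceJoinedToReal {Ω : Set (Fin n → Oct)} {x : Fin n → ℝ}
    (hΩo : IsOpen[τs n] Ω) (hΩc : @IsPreconnected _ (τs n) Ω) (hx : ofRealn x ∈ Ω) :
    Ω ⊆ sliceJoinedToReal Ω :=
  @IsPreconnected.subset_left_of_subset_union _ (τs n) _ _ _ (isOpen_sliceJoinedToReal hΩo)
    (isOpen_diff_sliceJoinedToReal hΩo) Set.disjoint_sdiff_right
    (fun _ hq => (em _).imp id (⟨hq, ·⟩)) ⟨_, hx, ofRealn_mem_sliceJoinedToReal hx⟩ hΩc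

theorem joinedIn_sliceTrace_of_realConnected {Ω : Set (Fin n → Oct)} {I : Oct} {r x : Fin n → ℝ}
    (hΩ : IsOpen[τs n] Ω) (hrc : RealConnected n Ω) (hI : I ∈ Sph) (hr : ofRealn r ∈ Ω)
    (hx : ofRealn x ∈ Ω) : JoinedIn (sliceTrace Ω I) (r, 0) (x, 0) := by
  have hreal : {z | ofRealn z ∈ Ω} = (fun z => (z, 0)) ⁻¹' sliceTrace Ω I := by
    ext z; simp [sliceTrace, aff_zero]
  have hopen : IsOpen {z | ofRealn z ∈ Ω} :=
    hreal ▸ (isOpen_τs_iff.1 hΩ I hI).preimage (by fun_prop)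
  have hpath := hopen.isConnected_iff_isPathConnected.1 ⟨⟨x, hx⟩, hrc⟩
  exact ((hpath.joinedIn r hr x hx).map (f := fun z => (z, 0)) (by fun_prop)).mono
    (hreal ▸ Set.image_preimage_subset _ _)

end

theorem joined_to_real_point_on_a_slice_general (n : ℕ)
    (Ω : Set (Fin n → Oct)) (hΩ : SliceDomain n Ω) (hrc : RealConnected n Ω) :
    ∀ q ∈ Ω, ∀ x : Fin n → ℝ, ofRealn x ∈ Ω →
      ∃ I ∈ Sph, ∃ γ : unitInterval → (Fin n → ℝ) × (Fin n → ℝ),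
        Continuous γ ∧ (∀ t, aff (γ t).1 (γ t).2 I ∈ Ω) ∧
        aff (γ 0).1 (γ 0).2 I = q ∧ aff (γ 1).1 (γ 1).2 I = ofRealn x := by
  intro q hq x hx
  obtain ⟨I, hI, p, ⟨r, hpr⟩, rfl⟩ :=
    subset_sliceJoinedToReal hΩ.1.2 (@IsConnected.isPreconnected _ (τs n) _ hΩ.2) hx hq
  have hr : ofRealn r ∈ Ω := aff_zero r I ▸ hpr.target_mem
  obtain ⟨γ, hγ⟩ := hpr.trans (joinedIn_sliceTrace_of_realConnected hΩ.1.2 hrc hI hr hx)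
  exact ⟨I, hI, γ, γ.continuous, hγ, by simp, by simp [aff_zero]⟩

/-- In a real-connected slice-domain meeting `ℝⁿ`, every point
is joined to every real point of the domain by a continuous path lying on a
single slice `ℂ_Iⁿ`. -/
theorem joined_to_real_point_on_a_slice (n : ℕ) (hn : 1 ≤ n)
    (Ω : Set (Fin n → Oct)) (hΩ : SliceDomain n Ω) (hrc : RealConnected n Ω)
    (hR : {x : Fin n → ℝ | ofRealn x ∈ Ω}.Nonempty) :
    ∀ q ∈ Ω, ∀ x : Fin n → ℝ, ofRealn x ∈ Ω →
      ∃ I ∈ Sph, ∃ γ : unitInterval → (Fin n → ℝ) × (Fin n → ℝ),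
        Continuous γ ∧ (∀ t, aff (γ t).1 (γ t).2 I ∈ Ω) ∧
        aff (γ 0).1 (γ 0).2 I = q ∧ aff (γ 1).1 (γ 1).2 I = ofRealn x :=
  joined_to_real_point_on_a_slice_general n Ω hΩ hrc
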